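/- Conjugacy of derivatives (converse direction): let h : F → ℝ be bounded and F^α-differentiable at every θ ∈ F, and let g = φ[h]. Then for every θ ∈ F, g is differentiable at v = J(θ) and g'(J(θ)) = (D_F^α h)(θ). -/

import Mathlib

/-!
Since `w` is uniformly continuous, cutting a fine subdivision at an extra point changes
`σ^α` by an arbitrarily small amount, so the mass `γ^α` is additive over adjacent arcs.
Additivity and finiteness force short arcs to carry small mass, hence `S_F^α` is continuous;
being strictly increasing, it is a homeomorphism of `[a₀, b₀]` onto `K`. Thus `v' → J(θ)` in
`K` forces `t' = (S_F^α)⁻¹(v') → w⁻¹(θ)`, so `w(t') → θ` with `w(t') ≠ θ`, and the difference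
quotient of `g` at `J(θ)` is the `F^α`-difference quotient of `h` at `θ`.
-/

open Set
open scoped ENNReal

structure Subdivision (a b : ℝ) where
  k : ℕ
  t : ℕ → ℝ
  first : t 0 = a
  last : t k = b
  mono : ∀ i < k, t i < t (i + 1)

def Subdivision.MeshLE {a b : ℝ} (P : Subdivision a b) (δ : ℝ) : Prop :=
  ∀ i < P.k, P.t (i + 1) - P.t i ≤ δ

noncomputable def sigmaSum {n : ℕ} (α : ℝ) (w : ℝ → EuclideanSpace ℝ (Fin n))
    {a b : ℝ} (P : Subdivision a b) : ℝ :=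
  (∑ i ∈ Finset.range P.k, ‖w (P.t (i + 1)) - w (P.t i)‖ ^ α) / Real.Gamma (α + 1)

noncomputable def gammaDelta {n : ℕ} (α : ℝ) (w : ℝ → EuclideanSpace ℝ (Fin n))
    (a b δ : ℝ) : ℝ≥0∞ :=
  ⨅ (P : Subdivision a b) (_ : P.MeshLE δ), ENNReal.ofReal (sigmaSum α w P)

noncomputable def massFn {n : ℕ} (α : ℝ) (w : ℝ → EuclideanSpace ℝ (Fin n))
    (a b : ℝ) : ℝ≥0∞ :=
  ⨆ (δ : ℝ) (_ : 0 < δ), gammaDelta α w a b δ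

/-- The staircase (rise) function S_F^α(t) = γ^α(F,a₀,t). -/
noncomputable def SF {n : ℕ} (α : ℝ) (w : ℝ → EuclideanSpace ℝ (Fin n))
    (a₀ : ℝ) (t : ℝ) : ℝ :=
  (massFn α w a₀ t).toReal

/-- `l` is the F-limit of `f` as θ' → θ through points of `F`. -/
def IsFLimit {n : ℕ} (F : Set (EuclideanSpace ℝ (Fin n)))
    (f : EuclideanSpace ℝ (Fin n) → ℝ) (θ : EuclideanSpace ℝ (Fin n)) (l : ℝ) : Prop :=
  ∀ ε > (0 : ℝ), ∃ δ > (0 : ℝ), ∀ θ' ∈ F, θ' ≠ θ → ‖θ' - θ‖ < δ → |f θ' - l| < ε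

/-- `f` is F-continuous at θ. -/
def FContinuousAt {n : ℕ} (F : Set (EuclideanSpace ℝ (Fin n)))
    (f : EuclideanSpace ℝ (Fin n) → ℝ) (θ : EuclideanSpace ℝ (Fin n)) : Prop :=
  IsFLimit F f θ (f θ)

/-- The F^α-derivative of `f` at θ is `l`:
l = F-lim_{θ'→θ} (f(θ') − f(θ))/(J(θ') − J(θ)). -/
def HasFAlphaDerivAt {n : ℕ} (F : Set (EuclideanSpace ℝ (Fin n)))
    (J : EuclideanSpace ℝ (Fin n) → ℝ) (f : EuclideanSpace ℝ (Fin n) → ℝ)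
    (θ : EuclideanSpace ℝ (Fin n)) (l : ℝ) : Prop :=
  IsFLimit F (fun θ' => (f θ' - f θ) / (J θ' - J θ)) θ l

/-- Upper F^α-sum U^α[f,F,P] of `f` over the subdivision `P`. -/
noncomputable def upperFSum {n : ℕ} (α : ℝ) (w : ℝ → EuclideanSpace ℝ (Fin n))
    (a₀ : ℝ) (f : EuclideanSpace ℝ (Fin n) → ℝ) {a b : ℝ} (P : Subdivision a b) : ℝ :=
  ∑ i ∈ Finset.range P.k,
    sSup (f '' (w '' Icc (P.t i) (P.t (i + 1)))) *
      (SF α w a₀ (P.t (i + 1)) - SF α w a₀ (P.t i))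

/-- Lower F^α-sum L^α[f,F,P] of `f` over the subdivision `P`. -/
noncomputable def lowerFSum {n : ℕ} (α : ℝ) (w : ℝ → EuclideanSpace ℝ (Fin n))
    (a₀ : ℝ) (f : EuclideanSpace ℝ (Fin n) → ℝ) {a b : ℝ} (P : Subdivision a b) : ℝ :=
  ∑ i ∈ Finset.range P.k,
    sInf (f '' (w '' Icc (P.t i) (P.t (i + 1)))) *
      (SF α w a₀ (P.t (i + 1)) - SF α w a₀ (P.t i))

/-- `f` is F^α-integrable on C(a,b) with integral `v`:
inf of upper sums = sup of lower sums = v. -/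
def HasFIntegral {n : ℕ} (α : ℝ) (w : ℝ → EuclideanSpace ℝ (Fin n)) (a₀ : ℝ)
    (f : EuclideanSpace ℝ (Fin n) → ℝ) (a b : ℝ) (v : ℝ) : Prop :=
  sInf (Set.range fun P : Subdivision a b => upperFSum α w a₀ f P) = v ∧
  sSup (Set.range fun P : Subdivision a b => lowerFSum α w a₀ f P) = v

open Filter Topology

namespace Subdivision

variable {a b c δ : ℝ}

theorem strictMonoOn (P : Subdivision a b) : StrictMonoOn P.t (Iic P.k) :=
  strictMonoOn_Iic_of_lt_succ P.mono

theorem t_mem_Icc (P : Subdivision a b) {i : ℕ} (hi : i ≤ P.k) : P.t i ∈ Icc a b := by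
  have h0 := P.strictMonoOn.monotoneOn (mem_Iic.2 (Nat.zero_le P.k)) (mem_Iic.2 hi)
    (Nat.zero_le i)
  have hk := P.strictMonoOn.monotoneOn (mem_Iic.2 hi) (mem_Iic.2 le_rfl) hi
  rw [P.first] at h0
  rw [P.last] at hk
  exact ⟨h0, hk⟩

def refl (a : ℝ) : Subdivision a a where
  k := 0
  t _ := a
  first := rfl
  last := rfl
  mono _ h := absurd h (Nat.not_lt_zero _)

def single (hab : a < b) : Subdivision a b where
  k := 1
  t i := if i = 0 then a else b
  first := rfl
  last := rfl
  mono i hi := by simpa [Nat.lt_one_iff.1 hi] using hab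

noncomputable def appendT (P : Subdivision a b) (Q : Subdivision b c) (i : ℕ) : ℝ :=
  if i ≤ P.k then P.t i else Q.t (i - P.k)

theorem appendT_of_le (P : Subdivision a b) (Q : Subdivision b c) {i : ℕ} (hi : i ≤ P.k) :
    appendT P Q i = P.t i :=
  if_pos hi

theorem appendT_add (P : Subdivision a b) (Q : Subdivision b c) (i : ℕ) :
    appendT P Q (P.k + i) = Q.t i := by
  rcases Nat.eq_zero_or_pos i with rfl | hi
  · rw [add_zero, appendT_of_le P Q le_rfl, P.last, Q.first]
  · rw [appendT, if_neg (by omega), Nat.add_sub_cancel_left]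

theorem rel_appendT_succ {P : Subdivision a b} {Q : Subdivision b c} {r : ℝ → ℝ → Prop}
    (hP : ∀ i < P.k, r (P.t i) (P.t (i + 1))) (hQ : ∀ i < Q.k, r (Q.t i) (Q.t (i + 1)))
    {i : ℕ} (hi : i < P.k + Q.k) : r (appendT P Q i) (appendT P Q (i + 1)) := by
  rcases lt_or_ge i P.k with h | h
  · rw [appendT_of_le P Q h.le, appendT_of_le P Q h]
    exact hP i h
  · obtain ⟨m, rfl⟩ := Nat.exists_eq_add_of_le h
    rw [appendT_add, add_assoc, appendT_add]
    exact hQ m (by omega)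

noncomputable def append (P : Subdivision a b) (Q : Subdivision b c) : Subdivision a c where
  k := P.k + Q.k
  t := appendT P Q
  first := by rw [appendT_of_le P Q (Nat.zero_le _), P.first]
  last := by rw [appendT_add, Q.last]
  mono _ := rel_appendT_succ P.mono Q.mono

def tail (P : Subdivision a b) (hk : 0 < P.k) : Subdivision (P.t 1) b where
  k := P.k - 1
  t i := P.t (i + 1)
  first := rfl
  last := by rw [Nat.sub_add_cancel hk, P.last]
  mono i hi := P.mono (i + 1) (by omega)

theorem meshLE_refl (a δ : ℝ) : (refl a).MeshLE δ := fun _ h => absurd h (Nat.not_lt_zero _)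

theorem meshLE_single (hab : a < b) (h : b - a ≤ δ) : (single hab).MeshLE δ := fun i hi => by
  simpa [single, Nat.lt_one_iff.1 hi] using h

theorem MeshLE.append {P : Subdivision a b} {Q : Subdivision b c} (hP : P.MeshLE δ)
    (hQ : Q.MeshLE δ) : (P.append Q).MeshLE δ := fun _ =>
  rel_appendT_succ (r := fun x y => y - x ≤ δ) hP hQ

theorem MeshLE.tail {P : Subdivision a b} (hP : P.MeshLE δ) (hk : 0 < P.k) :
    (P.tail hk).MeshLE δ := fun i hi => hP (i + 1) (by simp [Subdivision.tail] at hi; omega)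

end Subdivision

theorem exists_norm_sub_rpow_le {E : Type*} [SeminormedAddCommGroup E] {w : ℝ → E} {a c α : ℝ}
    (hw : ContinuousOn w (Icc a c)) (hα : 0 < α) {ε : ℝ} (hε : 0 < ε) :
    ∃ δ > 0, ∀ s ∈ Icc a c, ∀ u ∈ Icc a c, |u - s| ≤ δ → ‖w u - w s‖ ^ α ≤ ε := by
  obtain ⟨δ, hδ, H⟩ := Metric.uniformContinuousOn_iff.1
    (isCompact_Icc.uniformContinuousOn_of_continuous hw) _ (Real.rpow_pos_of_pos hε α⁻¹)
  refine ⟨δ / 2, half_pos hδ, fun s hs u hu hsu => ?_⟩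
  have hdist : ‖w u - w s‖ < ε ^ α⁻¹ := by
    rw [← dist_eq_norm]
    exact H u hu s hs (by rw [Real.dist_eq]; linarith)
  calc ‖w u - w s‖ ^ α ≤ (ε ^ α⁻¹) ^ α :=
        Real.rpow_le_rpow (norm_nonneg _) hdist.le hα.le
    _ = ε := Real.rpow_inv_rpow hε.le hα.ne'

section Mass

variable {n : ℕ} {α : ℝ} {w : ℝ → EuclideanSpace ℝ (Fin n)} {a b c δ : ℝ}

theorem sigmaSum_nonneg (hα : -1 ≤ α) (P : Subdivision a b) : 0 ≤ sigmaSum α w P :=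
  div_nonneg (Finset.sum_nonneg fun _ _ => Real.rpow_nonneg (norm_nonneg _) α)
    (Real.Gamma_nonneg_of_nonneg (by linarith))

theorem sigmaSum_refl : sigmaSum α w (Subdivision.refl a) = 0 := by
  simp [sigmaSum, Subdivision.refl]

theorem sigmaSum_single (hab : a < b) :
    sigmaSum α w (Subdivision.single hab) = ‖w b - w a‖ ^ α / Real.Gamma (α + 1) := by
  simp [sigmaSum, Subdivision.single]

theorem sigmaSum_append (P : Subdivision a b) (Q : Subdivision b c) :
    sigmaSum α w (P.append Q) = sigmaSum α w P + sigmaSum α w Q := by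
  simp only [sigmaSum, ← add_div, Subdivision.append, Finset.sum_range_add]
  congr 2
  · refine Finset.sum_congr rfl fun i hi => ?_
    rw [Finset.mem_range] at hi
    rw [Subdivision.appendT_of_le P Q hi, Subdivision.appendT_of_le P Q hi.le]
  · refine Finset.sum_congr rfl fun i _ => ?_
    rw [add_assoc, Subdivision.appendT_add, Subdivision.appendT_add]

theorem sigmaSum_eq_add_tail (P : Subdivision a b) (hk : 0 < P.k) :
    sigmaSum α w P =
      ‖w (P.t 1) - w a‖ ^ α / Real.Gamma (α + 1) + sigmaSum α w (P.tail hk) := by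
  obtain ⟨m, hm⟩ := Nat.exists_eq_add_of_lt hk
  simp only [sigmaSum, ← add_div, Subdivision.tail]
  rw [hm, Finset.sum_range_succ', zero_add, P.first, add_comm]
  simp

theorem gammaDelta_le_sigmaSum {P : Subdivision a b} (hP : P.MeshLE δ) :
    gammaDelta α w a b δ ≤ ENNReal.ofReal (sigmaSum α w P) :=
  iInf₂_le P hP

theorem gammaDelta_anti {δ' : ℝ} (h : δ ≤ δ') :
    gammaDelta α w a b δ' ≤ gammaDelta α w a b δ :=
  le_iInf₂ fun _ hP => gammaDelta_le_sigmaSum fun i hi => (hP i hi).trans h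

theorem gammaDelta_self : gammaDelta α w a a δ = 0 :=
  nonpos_iff_eq_zero.1 <| (gammaDelta_le_sigmaSum (Subdivision.meshLE_refl a δ)).trans_eq <| by
    rw [sigmaSum_refl, ENNReal.ofReal_zero]

theorem gammaDelta_le_of_sub_le (hab : a ≤ b) (h : b - a ≤ δ) :
    gammaDelta α w a b δ ≤ ENNReal.ofReal (‖w b - w a‖ ^ α / Real.Gamma (α + 1)) := by
  rcases hab.eq_or_lt with rfl | hab
  · rw [gammaDelta_self]
    exact zero_le
  · rw [← sigmaSum_single hab]
    exact gammaDelta_le_sigmaSum (Subdivision.meshLE_single hab h)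

theorem gammaDelta_le_add :
    gammaDelta α w a c δ ≤ gammaDelta α w a b δ + gammaDelta α w b c δ := by
  simp only [gammaDelta, ENNReal.iInf_add, ENNReal.add_iInf]
  refine le_iInf₂ fun Q hQ => le_iInf₂ fun P hP => ?_
  calc gammaDelta α w a c δ
      ≤ ENNReal.ofReal (sigmaSum α w (P.append Q)) := gammaDelta_le_sigmaSum (hP.append hQ)
    _ ≤ _ := by rw [sigmaSum_append]; exact ENNReal.ofReal_add_le

theorem gammaDelta_le_massFn (hδ : 0 < δ) : gammaDelta α w a b δ ≤ massFn α w a b :=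
  le_iSup₂ (f := fun δ (_ : 0 < δ) => gammaDelta α w a b δ) δ hδ

theorem massFn_le_add : massFn α w a c ≤ massFn α w a b + massFn α w b c :=
  iSup₂_le fun _ hδ => gammaDelta_le_add.trans <|
    add_le_add (gammaDelta_le_massFn hδ) (gammaDelta_le_massFn hδ)

theorem massFn_add_massFn_le_of_gammaDelta {X : ℝ≥0∞} {δ₀ : ℝ} (hδ₀ : 0 < δ₀)
    (h : ∀ δ, 0 < δ → δ ≤ δ₀ → gammaDelta α w a b δ + gammaDelta α w b c δ ≤ X) :
    massFn α w a b + massFn α w b c ≤ X := by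
  simp only [massFn, iSup_subtype']
  refine ENNReal.iSup_add_iSup_le fun δ₁ δ₂ => ?_
  have hδ : 0 < min (min δ₁.1 δ₂.1) δ₀ := lt_min (lt_min δ₁.2 δ₂.2) hδ₀
  exact (add_le_add (gammaDelta_anti ((min_le_left _ _).trans (min_le_left _ _)))
    (gammaDelta_anti ((min_le_left _ _).trans (min_le_right _ _)))).trans
    (h _ hδ (min_le_right _ _))

theorem exists_massFn_le_gammaDelta_add (hm : massFn α w a b ≠ ⊤) {ε δ₁ : ℝ} (hε : 0 < ε)
    (hδ₁ : 0 < δ₁) :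
    ∃ δ, 0 < δ ∧ δ ≤ δ₁ ∧ massFn α w a b ≤ gammaDelta α w a b δ + ENNReal.ofReal ε := by
  rcases eq_or_ne (massFn α w a b) 0 with h0 | h0
  · exact ⟨δ₁, hδ₁, le_rfl, h0 ▸ zero_le⟩
  have hlt : massFn α w a b - ENNReal.ofReal ε < massFn α w a b :=
    ENNReal.sub_lt_self hm h0 (ENNReal.ofReal_pos.2 hε).ne'
  obtain ⟨δ, hδlt⟩ := lt_iSup_iff.1 hlt
  obtain ⟨hδ, hδlt⟩ := lt_iSup_iff.1 hδlt
  refine ⟨min δ δ₁, lt_min hδ hδ₁, min_le_right _ _, ?_⟩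
  rw [← tsub_le_iff_right]
  exact hδlt.le.trans (gammaDelta_anti (min_le_left _ _))

theorem exists_forall_gammaDelta_le (hw : ContinuousOn w (Icc a c)) (hα : 0 < α) {ε : ℝ}
    (hε : 0 < ε) :
    ∃ δ₀ > 0, ∀ δ ≤ δ₀, ∀ s ∈ Icc a c, ∀ u ∈ Icc a c, s ≤ u → u - s ≤ δ →
      gammaDelta α w s u δ ≤ ENNReal.ofReal ε := by
  have hΓ : 0 < Real.Gamma (α + 1) := Real.Gamma_pos_of_pos (by linarith)
  obtain ⟨δ₀, hδ₀, hsmall⟩ := exists_norm_sub_rpow_le hw hα (mul_pos hε hΓ)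
  refine ⟨δ₀, hδ₀, fun δ hδ s hs u hu hsu hus => (gammaDelta_le_of_sub_le hsu hus).trans ?_⟩
  refine ENNReal.ofReal_le_ofReal ((div_le_iff₀ hΓ).2 (hsmall s hs u hu ?_))
  rw [abs_of_nonneg (sub_nonneg.2 hsu)]
  exact hus.trans hδ

/-- Cutting `P` at `b` costs at most two short pieces. The induction peels off the first piece
of `P`: either `b` lies in it, or the cut happens in the tail. -/
theorem gammaDelta_add_gammaDelta_le (hα : -1 ≤ α) {η : ℝ≥0∞}
    (hshort : ∀ s ∈ Icc a c, ∀ u ∈ Icc a c, s ≤ u → u - s ≤ δ → gammaDelta α w s u δ ≤ η)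
    (P : Subdivision a c) (hP : P.MeshLE δ) (hb : b ∈ Icc a c) :
    gammaDelta α w a b δ + gammaDelta α w b c δ ≤
      ENNReal.ofReal (sigmaSum α w P) + (η + η) := by
  induction hk : P.k generalizing a P with
  | zero =>
    have hac : a = c := by simpa [hk, P.first] using P.last
    subst hac
    obtain rfl : b = a := le_antisymm hb.2 hb.1
    simp [gammaDelta_self]
  | succ m ih =>
    have hk0 : 0 < P.k := by omega
    have ht₁ : P.t 1 ∈ Icc a c := P.t_mem_Icc hk0
    have hat₁ : a < P.t 1 := by simpa [P.first] using P.mono 0 hk0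
    have hgap : P.t 1 - a ≤ δ := by simpa [P.first] using hP 0 hk0
    have hσ : ENNReal.ofReal (sigmaSum α w P) =
        ENNReal.ofReal (‖w (P.t 1) - w a‖ ^ α / Real.Gamma (α + 1)) +
          ENNReal.ofReal (sigmaSum α w (P.tail hk0)) := by
      rw [sigmaSum_eq_add_tail P hk0, ENNReal.ofReal_add _ (sigmaSum_nonneg hα _)]
      exact div_nonneg (Real.rpow_nonneg (norm_nonneg _) α)
        (Real.Gamma_nonneg_of_nonneg (by linarith))
    have htail : gammaDelta α w (P.t 1) c δ ≤ ENNReal.ofReal (sigmaSum α w (P.tail hk0)) :=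
      gammaDelta_le_sigmaSum (hP.tail hk0)
    rcases lt_or_ge b (P.t 1) with hbt | htb
    · calc gammaDelta α w a b δ + gammaDelta α w b c δ
          ≤ η + (gammaDelta α w b (P.t 1) δ + gammaDelta α w (P.t 1) c δ) :=
            add_le_add (hshort a ⟨le_rfl, hb.1.trans hb.2⟩ b hb hb.1 (by linarith))
              gammaDelta_le_add
        _ ≤ η + (η + ENNReal.ofReal (sigmaSum α w (P.tail hk0))) :=
            add_le_add_right (add_le_add (hshort b hb _ ht₁ hbt.le (by linarith [hb.1])) htail) _
        _ = ENNReal.ofReal (sigmaSum α w (P.tail hk0)) + (η + η) := by ring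
        _ ≤ _ := by
            rw [hσ]
            gcongr
            exact le_add_self
    · have hshort' : ∀ s ∈ Icc (P.t 1) c, ∀ u ∈ Icc (P.t 1) c, s ≤ u → u - s ≤ δ →
          gammaDelta α w s u δ ≤ η := fun s hs u hu =>
        hshort s ⟨hat₁.le.trans hs.1, hs.2⟩ u ⟨hat₁.le.trans hu.1, hu.2⟩
      calc gammaDelta α w a b δ + gammaDelta α w b c δ
          ≤ gammaDelta α w a (P.t 1) δ + (gammaDelta α w (P.t 1) b δ + gammaDelta α w b c δ) := by
            rw [← add_assoc]
            exact add_le_add_left gammaDelta_le_add _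
        _ ≤ _ := by
            rw [hσ, add_assoc]
            exact add_le_add (gammaDelta_le_of_sub_le hat₁.le hgap)
              (ih hshort' (P.tail hk0) (hP.tail hk0) ⟨htb, hb.2⟩ (by simp [Subdivision.tail, hk]))

theorem massFn_add_massFn (hw : ContinuousOn w (Icc a c)) (hα : 0 < α) (hb : b ∈ Icc a c) :
    massFn α w a b + massFn α w b c = massFn α w a c := by
  refine le_antisymm (ENNReal.le_of_forall_pos_le_add fun ε hε' _ => ?_) massFn_le_add
  have hε : (0 : ℝ) < ε := hε'
  obtain ⟨δ₀, hδ₀, hshort⟩ := exists_forall_gammaDelta_le hw hα (half_pos hε)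
  refine massFn_add_massFn_le_of_gammaDelta hδ₀ fun δ hδ hδδ₀ => ?_
  calc gammaDelta α w a b δ + gammaDelta α w b c δ
      ≤ gammaDelta α w a c δ + ENNReal.ofReal ε := by
        show _ ≤ (⨅ (P : Subdivision a c) (_ : P.MeshLE δ), _) + _
        simp only [ENNReal.iInf_add]
        refine le_iInf₂ fun P hP => ?_
        have := gammaDelta_add_gammaDelta_le (by linarith) (hshort δ hδδ₀) P hP hb
        rwa [← ENNReal.ofReal_add (half_pos hε).le (half_pos hε).le, add_halves] at this
    _ ≤ massFn α w a c + ε := by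
        rw [ENNReal.ofReal_coe_nnreal]
        exact add_le_add_left (gammaDelta_le_massFn hδ) _

theorem exists_massFn_le_of_sub_le (hw : ContinuousOn w (Icc a c)) (hα : 0 < α)
    (hm : massFn α w a c ≠ ⊤) {ε : ℝ} (hε : 0 < ε) :
    ∃ δ > 0, ∀ b ∈ Icc a c, (b - a ≤ δ → massFn α w a b ≤ ENNReal.ofReal ε) ∧
      (c - b ≤ δ → massFn α w b c ≤ ENNReal.ofReal ε) := by
  obtain ⟨δ₀, hδ₀, hshort⟩ := exists_forall_gammaDelta_le hw hα (half_pos hε)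
  obtain ⟨δ, hδ, hδδ₀, happrox⟩ := exists_massFn_le_gammaDelta_add hm (half_pos hε) hδ₀
  have hhalves : ENNReal.ofReal (ε / 2) + ENNReal.ofReal (ε / 2) = ENNReal.ofReal ε := by
    rw [← ENNReal.ofReal_add (half_pos hε).le (half_pos hε).le, add_halves]
  refine ⟨δ, hδ, fun b hb => ?_⟩
  have hsplit : massFn α w a b + massFn α w b c ≤
      gammaDelta α w a b δ + gammaDelta α w b c δ + ENNReal.ofReal (ε / 2) :=
    (massFn_add_massFn hw hα hb).le.trans (happrox.trans (add_le_add_left gammaDelta_le_add _))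
  have hfin := massFn_add_massFn hw hα hb ▸ hm
  rw [ne_eq, ENNReal.add_eq_top, not_or] at hfin
  have ha : a ∈ Icc a c := ⟨le_rfl, hb.1.trans hb.2⟩
  have hc : c ∈ Icc a c := ⟨hb.1.trans hb.2, le_rfl⟩
  refine ⟨fun hba => (ENNReal.add_le_add_iff_right hfin.2).1 ?_,
    fun hcb => (ENNReal.add_le_add_iff_left hfin.1).1 ?_⟩
  · calc massFn α w a b + massFn α w b c
        ≤ ENNReal.ofReal (ε / 2) + massFn α w b c + ENNReal.ofReal (ε / 2) := by
          refine hsplit.trans ?_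
          gcongr
          exacts [hshort δ hδδ₀ a ha b hb hb.1 hba, gammaDelta_le_massFn hδ]
      _ = ENNReal.ofReal ε + massFn α w b c := by rw [add_right_comm, hhalves]
  · calc massFn α w a b + massFn α w b c
        ≤ massFn α w a b + ENNReal.ofReal (ε / 2) + ENNReal.ofReal (ε / 2) := by
          refine hsplit.trans ?_
          gcongr
          exacts [gammaDelta_le_massFn hδ, hshort δ hδδ₀ b hb c hc hb.2 hcb]
      _ = massFn α w a b + ENNReal.ofReal ε := by rw [add_assoc, hhalves]

theorem SF_eq_add {a₀ s t : ℝ} (hw : ContinuousOn w (Icc a₀ s)) (hα : 0 < α)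
    (hm : massFn α w a₀ s ≠ ⊤) (ht : t ∈ Icc a₀ s) :
    SF α w a₀ s = SF α w a₀ t + (massFn α w t s).toReal := by
  rw [← massFn_add_massFn hw hα ht, ENNReal.add_ne_top] at hm
  rw [SF, SF, ← massFn_add_massFn hw hα ht, ENNReal.toReal_add hm.1 hm.2]

theorem continuousOn_SF {a₀ b₀ : ℝ} (hw : ContinuousOn w (Icc a₀ b₀)) (hα : 0 < α)
    (hfin : ∀ t ∈ Icc a₀ b₀, massFn α w a₀ t ≠ ⊤) :
    ContinuousOn (SF α w a₀) (Icc a₀ b₀) := by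
  intro t ht
  rw [Metric.continuousWithinAt_iff]
  intro ε hε
  have hwt : ContinuousOn w (Icc a₀ t) := hw.mono (Icc_subset_Icc_right ht.2)
  have hwt' : ContinuousOn w (Icc t b₀) := hw.mono (Icc_subset_Icc_left ht.1)
  have hm : massFn α w t b₀ ≠ ⊤ := by
    have := massFn_add_massFn hw hα ht ▸ hfin b₀ ⟨ht.1.trans ht.2, le_rfl⟩
    exact (ENNReal.add_ne_top.1 this).2
  obtain ⟨δ₁, hδ₁, hleft⟩ := exists_massFn_le_of_sub_le hwt hα (hfin t ht) (half_pos hε)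
  obtain ⟨δ₂, hδ₂, hright⟩ := exists_massFn_le_of_sub_le hwt' hα hm (half_pos hε)
  refine ⟨min δ₁ δ₂, lt_min hδ₁ hδ₂, fun {s} hs hst => ?_⟩
  rw [Real.dist_eq] at hst ⊢
  rcases le_total t s with hts | hst'
  · rw [SF_eq_add (hw.mono (Icc_subset_Icc_right hs.2)) hα (hfin s hs) ⟨ht.1, hts⟩,
      add_sub_cancel_left, abs_of_nonneg ENNReal.toReal_nonneg]
    refine (ENNReal.toReal_le_of_le_ofReal (half_pos hε).le ((hright s ⟨hts, hs.2⟩).1 ?_)).trans_lt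
      (half_lt_self hε)
    rw [abs_of_nonneg (sub_nonneg.2 hts)] at hst
    exact hst.le.trans (min_le_right _ _)
  · rw [SF_eq_add hwt hα (hfin t ht) ⟨hs.1, hst'⟩, sub_add_cancel_left, abs_neg,
      abs_of_nonneg ENNReal.toReal_nonneg]
    refine (ENNReal.toReal_le_of_le_ofReal (half_pos hε).le ((hleft s ⟨hs.1, hst'⟩).2 ?_)).trans_lt
      (half_lt_self hε)
    rw [abs_of_nonpos (sub_nonpos.2 hst')] at hst
    linarith [min_le_left δ₁ δ₂]

end Mass

theorem StrictMonoOn.tendsto_of_rightInvOn {α β : Type*} [LinearOrder α] [TopologicalSpace α]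
    [OrderTopology α] [LinearOrder β] [TopologicalSpace β] [OrderTopology β]
    {f : α → β} {g : β → α} {s : Set α} {T : Set β} (hf : StrictMonoOn f s)
    (hs : s.OrdConnected) (hg : MapsTo g T s) (hfg : RightInvOn g f T) {x : α} (hx : x ∈ s) :
    Tendsto g (𝓝[T] (f x)) (𝓝 x) := by
  refine tendsto_order.2 ⟨fun l hl => ?_, fun u hu => ?_⟩
  · by_cases hls : l ∈ s
    · filter_upwards [inter_mem_nhdsWithin T (Ioi_mem_nhds (hf hls hx hl))] with y hy
      rw [← hf.lt_iff_lt hls (hg hy.1), hfg hy.1]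
      exact hy.2
    · filter_upwards [self_mem_nhdsWithin] with y hy
      by_contra! hle
      exact hls (hs.out (hg hy) hx ⟨hle, hl.le⟩)
  · by_cases hus : u ∈ s
    · filter_upwards [inter_mem_nhdsWithin T (Iio_mem_nhds (hf hx hus hu))] with y hy
      rw [← hf.lt_iff_lt (hg hy.1) hus, hfg hy.1]
      exact hy.2
    · filter_upwards [self_mem_nhdsWithin] with y hy
      by_contra! hle
      exact hus (hs.out hx (hg hy) ⟨hu.le, hle⟩)

theorem IsFLimit.tendsto {n : ℕ} {F : Set (EuclideanSpace ℝ (Fin n))}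
    {f : EuclideanSpace ℝ (Fin n) → ℝ} {θ : EuclideanSpace ℝ (Fin n)} {l : ℝ}
    (h : IsFLimit F f θ l) : Tendsto f (𝓝[F \ {θ}] θ) (𝓝 l) :=
  Metric.tendsto_nhdsWithin_nhds.2 fun ε hε =>
    let ⟨δ, hδ, H⟩ := h ε hε
    ⟨δ, hδ, fun _ hx hxδ => by
      rw [Real.dist_eq]
      exact H _ hx.1 hx.2 (by rwa [← dist_eq_norm])⟩

theorem hasDerivWithinAt_of_hasFAlphaDerivAt {n : ℕ} {a b t d : ℝ}
    {w : ℝ → EuclideanSpace ℝ (Fin n)} {S g : ℝ → ℝ} {J h : EuclideanSpace ℝ (Fin n) → ℝ}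
    (hw : ContinuousOn w (Icc a b)) (hinj : InjOn w (Icc a b))
    (hSc : ContinuousOn S (Icc a b)) (hS : StrictMonoOn S (Icc a b))
    (hJ : ∀ t ∈ Icc a b, J (w t) = S t) (hg : ∀ t ∈ Icc a b, g (S t) = h (w t))
    (ht : t ∈ Icc a b) (hd : HasFAlphaDerivAt (w '' Icc a b) J h (w t) d) :
    HasDerivWithinAt g d (Icc (S a) (S b)) (S t) := by
  have hsurj : SurjOn S (Icc a b) (Icc (S a) (S b)) := intermediate_value_Icc (ht.1.trans ht.2) hSc
  set ψ := Function.invFunOn S (Icc a b)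
  have hψ : MapsTo ψ (Icc (S a) (S b)) (Icc a b) := hsurj.mapsTo_invFunOn
  have hSψ : RightInvOn ψ S (Icc (S a) (S b)) := hsurj.rightInvOn_invFunOn
  have hψt : Tendsto ψ (𝓝[Icc (S a) (S b) \ {S t}] (S t)) (𝓝[Icc a b] t) :=
    tendsto_nhdsWithin_iff.2
      ⟨(hS.tendsto_of_rightInvOn ordConnected_Icc hψ hSψ ht).mono_left
        (nhdsWithin_mono _ sdiff_subset),
       eventually_mem_nhdsWithin.mono fun v hv => hψ hv.1⟩
  have hwψ : Tendsto (w ∘ ψ) (𝓝[Icc (S a) (S b) \ {S t}] (S t))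
      (𝓝[w '' Icc a b \ {w t}] (w t)) := by
    refine tendsto_nhdsWithin_iff.2 ⟨(hw t ht).tendsto.comp hψt,
      eventually_mem_nhdsWithin.mono fun v hv => ⟨mem_image_of_mem w (hψ hv.1), fun hvt => ?_⟩⟩
    refine hv.2 ?_
    rw [← hSψ hv.1, hinj (hψ hv.1) ht hvt, mem_singleton_iff]
  rw [hasDerivWithinAt_iff_tendsto_slope]
  refine (hd.tendsto.comp hwψ).congr' (eventually_mem_nhdsWithin.mono fun v hv => ?_)
  simp only [Function.comp_apply, slope_def_field]
  rw [hJ _ (hψ hv.1), hJ t ht, ← hg _ (hψ hv.1), ← hg t ht, hSψ hv.1]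

theorem conjugacy_of_derivatives_converse_general {n : ℕ} {a₀ b₀ : ℝ}
    (w : ℝ → EuclideanSpace ℝ (Fin n))
    (hw : ContinuousOn w (Icc a₀ b₀)) (hinj : InjOn w (Icc a₀ b₀))
    {α : ℝ} (hα : α ∈ Icc (1 : ℝ) (n : ℝ))
    (hfin : ∀ t ∈ Icc a₀ b₀, massFn α w a₀ t ≠ ⊤)
    (hS : StrictMonoOn (SF α w a₀) (Icc a₀ b₀))
    (J : EuclideanSpace ℝ (Fin n) → ℝ)
    (hJ : ∀ t ∈ Icc a₀ b₀, J (w t) = SF α w a₀ t)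
    (h D : EuclideanSpace ℝ (Fin n) → ℝ)
    (hdiff : ∀ θ ∈ w '' Icc a₀ b₀, HasFAlphaDerivAt (w '' Icc a₀ b₀) J h θ (D θ))
    (g : ℝ → ℝ) (hg : ∀ t ∈ Icc a₀ b₀, g (SF α w a₀ t) = h (w t)) :
    ∀ θ ∈ w '' Icc a₀ b₀,
      HasDerivWithinAt g (D θ) (Icc (SF α w a₀ a₀) (SF α w a₀ b₀)) (J θ) := by
  rintro _ ⟨t, ht, rfl⟩
  rw [hJ t ht]
  exact hasDerivWithinAt_of_hasFAlphaDerivAt hw hinj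
    (continuousOn_SF hw (zero_lt_one.trans_le hα.1) hfin) hS hJ hg ht
    (hdiff _ (mem_image_of_mem w ht))

/-- conjugacy of derivatives, converse direction: if h is
bounded and F^α-differentiable at every θ ∈ F with derivative D(θ), and
g = φ[h], then g is differentiable (within K) at v = J(θ) and
g'(J(θ)) = (D_F^α h)(θ). -/
theorem conjugacy_of_derivatives_converse {n : ℕ} (hn : 1 ≤ n) {a₀ b₀ : ℝ}
    (w : ℝ → EuclideanSpace ℝ (Fin n))
    (hw : ContinuousOn w (Icc a₀ b₀)) (hinj : InjOn w (Icc a₀ b₀))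
    {α : ℝ} (hα : α ∈ Icc (1 : ℝ) (n : ℝ))
    (hfin : ∀ t ∈ Icc a₀ b₀, massFn α w a₀ t ≠ ⊤)
    (hS : StrictMonoOn (SF α w a₀) (Icc a₀ b₀))
    (J : EuclideanSpace ℝ (Fin n) → ℝ)
    (hJ : ∀ t ∈ Icc a₀ b₀, J (w t) = SF α w a₀ t)
    (h D : EuclideanSpace ℝ (Fin n) → ℝ)
    (hbdd : ∃ M, ∀ θ ∈ w '' Icc a₀ b₀, |h θ| ≤ M)
    (hdiff : ∀ θ ∈ w '' Icc a₀ b₀, HasFAlphaDerivAt (w '' Icc a₀ b₀) J h θ (D θ))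
    (g : ℝ → ℝ) (hg : ∀ t ∈ Icc a₀ b₀, g (SF α w a₀ t) = h (w t)) :
    ∀ θ ∈ w '' Icc a₀ b₀,
      HasDerivWithinAt g (D θ) (Icc (SF α w a₀ a₀) (SF α w a₀ b₀)) (J θ) :=
  conjugacy_of_derivatives_converse_general w hw hinj hα hfin hS J hJ h D hdiff g hg
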